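/- arXiv:1412.5458 — 2 statements merged into one kernel-verified Lean document; each statement's English description precedes it below -/
import Mathlib

section
/- Let F be a field with characteristic not 2 and let a, b be nonzero elements of F. The quaternion algebra (a,b/F) (generated by i, j with i² = a, j² = b, ij = -ji) is a division ring if and only if the equation a·x² + b·y² = z² has no solution (x,y,z) ∈ F³ with (x,y,z) ≠ (0,0,0). -/
/-!
Conjugation satisfies `q * star q = N q` with `N (w + x i + y j + z k) = w² - a x² - b y² + a b z²`,
so `q` is a unit iff `N q ≠ 0`. A nonzero solution of `a x² + b y² = z²` gives the quaternion
`z + x i + y j` of norm zero. Conversely, if `N q = 0` with `q ≠ 0`, the identity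
`a (x w + b y z)² + b (y w - a x z)² = (a x² + b y²) (w² + a b z²) = (a x² + b y²)²`
gives a solution when `a x² + b y² ≠ 0`; otherwise `(x, y, 0)` is one, or, when `x = y = 0`,
`(w, a z, 0)` is.
-/

open Quaternion

namespace QuaternionAlgebra

theorem isUnit_iff_re_mul_star_ne_zero {F : Type*} [Field F] {c₁ c₂ c₃ : F}
    (q : ℍ[F,c₁,c₂,c₃]) : IsUnit q ↔ (q * star q).re ≠ 0 := by
  have hmul : IsUnit (q * star q) ↔ IsUnit q := by
    rw [(star_comm_self (x := q)).symm.isUnit_mul_iff, isUnit_star, and_self]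
  rw [← hmul, mul_star_eq_coe, re_coe, ← coe_algebraMap]
  generalize (q * star q).re = n
  exact ⟨fun h hn => not_isUnit_zero (by rwa [hn, map_zero] at h), fun h => (Ne.isUnit h).map _⟩

theorem re_mul_star_mk {R : Type*} [CommRing R] (a b w x y z : R) :
    ((⟨w, x, y, z⟩ : ℍ[R,a,b]) * star ⟨w, x, y, z⟩).re =
      w ^ 2 - a * x ^ 2 - b * y ^ 2 + a * b * z ^ 2 := by
  simp only [re_mul, star_mk]
  ring

end QuaternionAlgebra

theorem exists_ne_zero_mul_sq_add_mul_sq_eq_sq_of_norm_eq_zero {F : Type*} [Field F] {a b : F}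
    (ha : a ≠ 0) {w x y z : F} (hwxyz : ¬(w = 0 ∧ x = 0 ∧ y = 0 ∧ z = 0))
    (hN : w ^ 2 - a * x ^ 2 - b * y ^ 2 + a * b * z ^ 2 = 0) :
    ∃ X Y Z : F, (X, Y, Z) ≠ (0, 0, 0) ∧ a * X ^ 2 + b * Y ^ 2 = Z ^ 2 := by
  by_cases hxy : a * x ^ 2 + b * y ^ 2 = 0
  · by_cases hxy0 : x = 0 ∧ y = 0
    · obtain ⟨rfl, rfl⟩ := hxy0
      refine ⟨w, a * z, 0, ?_, by linear_combination a * hN⟩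
      simp only [ne_eq, Prod.mk.injEq, mul_eq_zero, ha, false_or, and_true]
      tauto
    · exact ⟨x, y, 0, by simpa using hxy0, by simpa using hxy⟩
  · exact ⟨x * w + b * y * z, y * w - a * x * z, a * x ^ 2 + b * y ^ 2, by simp [hxy],
      by linear_combination (a * x ^ 2 + b * y ^ 2) * hN⟩

theorem quaternionAlgebra_isDivisionRing_iff_general {F : Type*} [Field F]
    (a b : F) (ha : a ≠ 0) :
    (∀ q : ℍ[F, a, b], q ≠ 0 → IsUnit q) ↔
      ¬ ∃ x y z : F, (x, y, z) ≠ (0, 0, 0) ∧ a * x ^ 2 + b * y ^ 2 = z ^ 2 := by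
  simp only [QuaternionAlgebra.isUnit_iff_re_mul_star_ne_zero]
  constructor
  · rintro hN ⟨x, y, z, hxyz, hconic⟩
    refine hN ⟨z, x, y, 0⟩ ?_ ?_
    · intro hq
      apply hxyz
      simp_all [QuaternionAlgebra.ext_iff]
    · rw [QuaternionAlgebra.re_mul_star_mk]
      linear_combination -hconic
  · rintro hconic ⟨w, x, y, z⟩ hq hN
    rw [QuaternionAlgebra.re_mul_star_mk] at hN
    exact hconic (exists_ne_zero_mul_sq_add_mul_sq_eq_sq_of_norm_eq_zero ha
      (by rintro ⟨rfl, rfl, rfl, rfl⟩; exact hq rfl) hN)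

/-- The quaternion algebra `(a,b/F)` over a field `F` of characteristic ≠ 2, with `a b ≠ 0`,
is a division ring iff `a·x² + b·y² = z²` has no nonzero solution in `F³`. -/
theorem quaternionAlgebra_isDivisionRing_iff {F : Type*} [Field F]
    (hF : ringChar F ≠ 2) (a b : F) (ha : a ≠ 0) (hb : b ≠ 0) :
    (∀ q : ℍ[F, a, b], q ≠ 0 → IsUnit q) ↔
      ¬ ∃ x y z : F, (x, y, z) ≠ (0, 0, 0) ∧ a * x ^ 2 + b * y ^ 2 = z ^ 2 :=
  quaternionAlgebra_isDivisionRing_iff_general a b ha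
end

section
/- Let m, n be coprime positive integers and G = C_m ⋊ C_n a semidirect product in which, for every prime q dividing n, the Sylow q-subgroup of C_n acts nontrivially on C_m, and suppose that for every prime p dividing m and every prime q dividing |R_p| one has v_q(p-1) ≤ v_q(k_p), where R_p is the product of the Sylow q-subgroups of C_n acting nontrivially on the Sylow p-subgroup of C_m and k_p is the order of the kernel of the action of R_p on the Sylow p-subgroup. Then every prime divisor q of n satisfies: q divides k and q divides n/k, where k = ∏_p k_p is the order of the kernel of the action of C_n on C_m. In particular k ≠ 1. -/
/-!
Fix a prime `q ∣ n`. For each Sylow `p`-subgroup `P` of `C_m`, `q` divides the order of the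
kernel of the action on `P`: either a Sylow `q`-subgroup of `C_n` acts trivially on `P`, or one
of its elements acts on `P` by an automorphism of `q`-power order, so that
`q ∣ |Aut P| = p^(a-1) (p - 1)`, hence `q ∣ p - 1`, and `v_q(p - 1) ≤ v_q(k_p)` gives `q ∣ k_p`.
In the cyclic group `C_n` the unique subgroup of order `q` therefore fixes every Sylow subgroup
of `C_m` pointwise, hence all of `C_m`, and `q ∣ k`. If `q ∤ n / k`, the kernel would contain a
whole Sylow `q`-subgroup, which acts nontrivially by assumption.
-/

theorem IsCyclic.mem_of_orderOf_dvd_card {G : Type*} [Group G] [Finite G] [IsCyclic G]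
    {H : Subgroup G} {g : G} (h : orderOf g ∣ Nat.card H) : g ∈ H := by
  classical
  have := Fintype.ofFinite G
  -- A cyclic group has at most `|H|` solutions of `x ^ |H| = 1`, and `H` already supplies them all.
  let roots : Finset G := {x | x ^ Nat.card H = 1}
  have hH : (H : Set G).toFinset ⊆ roots := fun x hx => by
    simpa [roots] using orderOf_dvd_iff_pow_eq_one.mp (H.orderOf_dvd_natCard (by simpa using hx))
  have hcard : roots.card ≤ (H : Set G).toFinset.card := by
    rw [← Nat.card_eq_card_toFinset]
    exact IsCyclic.card_pow_eq_one_le Nat.card_pos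
  have hg : g ∈ roots := by simpa [roots] using orderOf_dvd_iff_pow_eq_one.mp h
  rw [← Finset.eq_of_subset_of_card_le hH hcard] at hg
  simpa using hg

theorem IsCyclic.sylow_le_of_not_dvd_index {G : Type*} [Group G] [Finite G] [IsCyclic G]
    {q : ℕ} [Fact q.Prime] (Q : Sylow q G) {K : Subgroup G} (h : ¬ q ∣ K.index) :
    (Q : Subgroup G) ≤ K := by
  obtain ⟨v, hv⟩ := Q.isPGroup'.exists_card_eq
  have hcop : (Nat.card Q).Coprime K.index :=
    hv ▸ Nat.Coprime.pow_left v ((Nat.Prime.coprime_iff_not_dvd Fact.out).mpr h)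
  have hQK : Nat.card Q ∣ Nat.card K :=
    hcop.dvd_of_dvd_mul_right (K.card_mul_index ▸ Q.1.card_subgroup_dvd_card)
  exact fun b hb => mem_of_orderOf_dvd_card ((Q.1.orderOf_dvd_natCard hb).trans hQK)

theorem Subgroup.eq_top_of_forall_sylow_le {G : Type*} [Group G] [Finite G] (H : Subgroup G)
    (h : ∀ p, p.Prime → p ∣ Nat.card G → ∀ P : Sylow p G, (P : Subgroup G) ≤ H) : H = ⊤ := by
  refine index_eq_one.mp (Nat.eq_one_iff_not_exists_prime_dvd.mpr fun p hp hpH => ?_)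
  have := Fact.mk hp
  obtain ⟨P⟩ : Nonempty (Sylow p G) := inferInstance
  exact P.not_dvd_index (hpH.trans (index_dvd_of_le (h p hp (hpH.trans H.index_dvd_card) P)))

theorem MulAut.eq_one_of_forall_sylow {G : Type*} [Group G] [Finite G] (f : MulAut G)
    (h : ∀ p, p.Prime → p ∣ Nat.card G → ∀ P : Sylow p G, ∀ x ∈ P, f x = x) : f = 1 := by
  have hfix : f.toMonoidHom.eqLocus (MonoidHom.id G) = ⊤ :=
    Subgroup.eq_top_of_forall_sylow_le _ fun p hp hpG P x hx => h p hp hpG P x hx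
  ext x
  exact (Subgroup.eq_top_iff' _).mp hfix x

theorem MulAut.characteristic_eq_one_iff {G : Type*} [Group G] (H : Subgroup G)
    [H.Characteristic] {f : MulAut G} : MulAut.characteristic H f = 1 ↔ ∀ x ∈ H, f x = x := by
  simp [MulEquiv.ext_iff, Subtype.ext_iff]

theorem IsPGroup.dvd_orderOf_map {q : ℕ} [Fact q.Prime] {G M : Type*} [Group G] [Monoid M]
    {K : Subgroup G} (hK : IsPGroup q K) (f : G →* M) {g : G} (hg : g ∈ K) (hfg : f g ≠ 1) :
    q ∣ orderOf (f g) := by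
  obtain ⟨k, hk⟩ := hK ⟨g, hg⟩
  obtain ⟨i, -, hi⟩ := (Nat.dvd_prime_pow Fact.out).mp <|
    (orderOf_map_dvd f g).trans (orderOf_dvd_of_pow_eq_one (by simpa [Subtype.ext_iff] using hk))
  cases i with
  | zero => exact absurd (orderOf_eq_one_iff.mp (by simpa using hi)) hfg
  | succ i => exact hi ▸ dvd_pow_self _ i.succ_ne_zero

theorem IsPGroup.dvd_sub_one_of_dvd_orderOf_mulAut {p q : ℕ} [Fact p.Prime] (hq : q.Prime)
    (hqp : q ≠ p) {P : Type*} [Group P] [Finite P] [IsCyclic P] (hP : IsPGroup p P)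
    {f : MulAut P} (h : q ∣ orderOf f) : q ∣ p - 1 := by
  have hp : p.Prime := Fact.out
  obtain ⟨a, ha⟩ := hP.exists_card_eq
  have hqAut : q ∣ (p ^ a).totient := by
    rw [← ha, ← IsCyclic.card_mulAut]
    exact h.trans (orderOf_dvd_natCard f)
  cases a with
  | zero => exact absurd (Nat.dvd_one.mp (by simpa using hqAut)) hq.ne_one
  | succ a =>
    rw [Nat.totient_prime_pow_succ hp] at hqAut
    refine (hq.dvd_mul.mp hqAut).resolve_left fun hqpa => hqp ?_
    exact (Nat.prime_dvd_prime_iff_eq hq hp).mp (hq.dvd_of_dvd_pow hqpa)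

section Action

variable {A B : Type*} [Group A] [Group B] [Finite A] (φ : B →* MulAut A)

theorem dvd_sub_one_of_sylow_acts_nontrivially [IsCyclic A] {p q : ℕ} [Fact p.Prime]
    [Fact q.Prime] (hqp : q ≠ p) {Q : Sylow q B} {P : Sylow p A} {b : B} (hb : b ∈ Q) {x : A}
    (hx : x ∈ (P : Subgroup A)) (hne : φ b x ≠ x) : q ∣ p - 1 := by
  have := P.characteristic_of_normal inferInstance
  have hψ : ((MulAut.characteristic (P : Subgroup A)).comp φ) b ≠ 1 := fun h =>
    hne ((MulAut.characteristic_eq_one_iff _).mp h x hx)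
  exact P.isPGroup'.dvd_sub_one_of_dvd_orderOf_mulAut Fact.out hqp
    (Q.isPGroup'.dvd_orderOf_map _ hb hψ)

theorem dvd_card_fixingSubgroup_comap [IsCyclic A] [Finite B] {p q : ℕ} [Fact p.Prime]
    [Fact q.Prime] (hqp : q ≠ p) (hqB : q ∣ Nat.card B) (P : Sylow p A) (R : Subgroup B)
    (hR : ∀ Q : Sylow q B, (∃ b ∈ Q, ∃ x ∈ (P : Subgroup A), φ b x ≠ x) → (Q : Subgroup B) ≤ R)
    (hval : q ∣ Nat.card R → (p - 1).factorization q ≤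
      (Nat.card {b : B // b ∈ R ∧ ∀ x ∈ (P : Subgroup A), φ b x = x}).factorization q) :
    q ∣ Nat.card ((fixingSubgroup (MulAut A) (P : Set A)).comap φ) := by
  set F := (fixingSubgroup (MulAut A) (P : Set A)).comap φ
  have hF (b : B) : b ∈ F ↔ ∀ x ∈ (P : Subgroup A), φ b x = x := by
    simp only [F, Subgroup.mem_comap, mem_fixingSubgroup_iff, MulAut.smul_def]
    rfl
  obtain ⟨Q⟩ : Nonempty (Sylow q B) := inferInstance
  have hqQ : q ∣ Nat.card Q := Q.dvd_card_of_dvd_card hqB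
  by_cases hQF : (Q : Subgroup B) ≤ F
  · exact hqQ.trans (Subgroup.card_dvd_of_le hQF)
  obtain ⟨b, hbQ, hbF⟩ := SetLike.not_le_iff_exists.mp hQF
  obtain ⟨x, hx, hne⟩ := not_forall₂.mp (mt (hF b).mpr hbF)
  have hQR := hR Q ⟨b, hbQ, x, hx, hne⟩
  have hqp1 : q ∣ p - 1 := dvd_sub_one_of_sylow_acts_nontrivially φ hqp hbQ hx hne
  have hkp : Nat.card {b : B // b ∈ R ∧ ∀ x ∈ (P : Subgroup A), φ b x = x} = Nat.card ↥(R ⊓ F) :=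
    Nat.card_congr (Equiv.subtypeEquivRight fun b => by rw [Subgroup.mem_inf, hF])
  have hv : 0 < (p - 1).factorization q := (Fact.out : q.Prime).factorization_pos_of_dvd
    (Nat.sub_ne_zero_of_lt (Fact.out : p.Prime).one_lt) hqp1
  have hqk : q ∣ Nat.card ↥(R ⊓ F) := hkp ▸ Nat.dvd_of_factorization_pos
    (hv.trans_le (hval (hqQ.trans (Subgroup.card_dvd_of_le hQR)))).ne'
  exact hqk.trans (Subgroup.card_dvd_of_le inf_le_right)

theorem dvd_card_ker_of_forall_sylow [Finite B] [IsCyclic B] {q : ℕ} [Fact q.Prime]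
    (hqB : q ∣ Nat.card B)
    (h : ∀ p, p.Prime → p ∣ Nat.card A → ∀ P : Sylow p A,
      q ∣ Nat.card ((fixingSubgroup (MulAut A) (P : Set A)).comap φ)) :
    q ∣ Nat.card φ.ker := by
  obtain ⟨b, hb⟩ := exists_prime_orderOf_dvd_card' q hqB
  have hb1 : φ b = 1 := MulAut.eq_one_of_forall_sylow _ fun p hp hpA P x hx => by
    have hbP := IsCyclic.mem_of_orderOf_dvd_card (hb ▸ h p hp hpA P)
    exact (mem_fixingSubgroup_iff _).mp hbP x hx
  exact hb ▸ φ.ker.orderOf_dvd_natCard hb1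

end Action

theorem prime_divisors_of_n_divide_k_and_n_div_k_general
    (m n : ℕ) (hn1 : 1 < n) (hcop : Nat.Coprime m n)
    (A B : Type*) [Group A] [Group B] [Finite A] [Finite B]
    [IsCyclic A] [IsCyclic B] (hA : Nat.card A = m) (hB : Nat.card B = n)
    (φ : B →* MulAut A)
    (hact : ∀ q : ℕ, q.Prime → q ∣ n → ∀ Qq : Sylow q B,
      ∃ b ∈ Qq, ∃ x : A, φ b x ≠ x)
    (hval : ∀ p : ℕ, p.Prime → p ∣ m → ∀ Pp : Sylow p A, ∀ Rp : Subgroup B,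
      Rp = (⨆ q ∈ {q : ℕ | q.Prime ∧ ∃ Qq : Sylow q B, ∃ b ∈ Qq,
              ∃ x ∈ (Pp : Subgroup A), φ b x ≠ x},
            ⨆ Qq : Sylow q B, (Qq : Subgroup B)) →
      ∀ kp : ℕ, kp = Nat.card {b : B // b ∈ Rp ∧ ∀ x ∈ (Pp : Subgroup A), φ b x = x} →
      ∀ q : ℕ, q.Prime → q ∣ Nat.card ↥Rp →
        (p - 1).factorization q ≤ kp.factorization q) :
    (∀ q : ℕ, q.Prime → q ∣ n →
      q ∣ Nat.card φ.ker ∧ q ∣ n / Nat.card φ.ker) ∧ Nat.card φ.ker ≠ 1 := by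
  have hdvd_ker (q : ℕ) (hq : q.Prime) (hqn : q ∣ n) : q ∣ Nat.card φ.ker := by
    have := Fact.mk hq
    refine dvd_card_ker_of_forall_sylow φ (hB ▸ hqn) fun p hp hpA P => ?_
    have := Fact.mk hp
    have hqp : q ≠ p := fun h => hq.ne_one (Nat.eq_one_of_dvd_coprimes hcop (h ▸ hA ▸ hpA) hqn)
    exact dvd_card_fixingSubgroup_comap φ hqp (hB ▸ hqn) P _
      (fun Q hQ => le_iSup₂_of_le (f := fun q _ => ⨆ Qq : Sylow q B, (Qq : Subgroup B)) q
        ⟨hq, Q, hQ⟩ (le_iSup (fun Qq : Sylow q B => (Qq : Subgroup B)) Q))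
      (hval p hp (hA ▸ hpA) P _ rfl _ rfl q hq)
  refine ⟨fun q hq hqn => ⟨hdvd_ker q hq hqn, ?_⟩, fun hk => ?_⟩
  · have := Fact.mk hq
    obtain ⟨Q⟩ : Nonempty (Sylow q B) := inferInstance
    obtain ⟨b, hbQ, x, hne⟩ := hact q hq hqn Q
    rw [← hB, ← φ.ker.card_mul_index, Nat.mul_div_cancel_left _ Nat.card_pos]
    by_contra hq_index
    exact hne (by rw [φ.mem_ker.mp (IsCyclic.sylow_le_of_not_dvd_index Q hq_index hbQ)]; rfl)
  · have hq := Nat.minFac_prime (show n ≠ 1 by omega)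
    exact hq.ne_one (Nat.dvd_one.mp (hk ▸ hdvd_ker _ hq (Nat.minFac_dvd n)))

/-- For a semidirect product `C_m ⋊ C_n` (modelled by cyclic groups `A` of order `m` and
`B` of order `n` with action `φ : B →* Aut(A)`), with `gcd(m,n) = 1`, such that every
Sylow `q`-subgroup of `B` acts nontrivially on `A` and for every prime `p ∣ m` and prime
`q ∣ |R_p|` one has `v_q(p-1) ≤ v_q(k_p)`, every prime divisor `q` of `n` divides both
`k` and `n/k`, where `k` is the order of the kernel of the action; in particular `k ≠ 1`. -/
theorem prime_divisors_of_n_divide_k_and_n_div_k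
    (m n : ℕ) (hm1 : 1 < m) (hn1 : 1 < n) (hcop : Nat.Coprime m n)
    (A B : Type*) [Group A] [Group B] [Finite A] [Finite B]
    [IsCyclic A] [IsCyclic B] (hA : Nat.card A = m) (hB : Nat.card B = n)
    (φ : B →* MulAut A)
    (hact : ∀ q : ℕ, q.Prime → q ∣ n → ∀ Qq : Sylow q B,
      ∃ b ∈ Qq, ∃ x : A, φ b x ≠ x)
    (hval : ∀ p : ℕ, p.Prime → p ∣ m → ∀ Pp : Sylow p A, ∀ Rp : Subgroup B,
      Rp = (⨆ q ∈ {q : ℕ | q.Prime ∧ ∃ Qq : Sylow q B, ∃ b ∈ Qq,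
              ∃ x ∈ (Pp : Subgroup A), φ b x ≠ x},
            ⨆ Qq : Sylow q B, (Qq : Subgroup B)) →
      ∀ kp : ℕ, kp = Nat.card {b : B // b ∈ Rp ∧ ∀ x ∈ (Pp : Subgroup A), φ b x = x} →
      ∀ q : ℕ, q.Prime → q ∣ Nat.card ↥Rp →
        (p - 1).factorization q ≤ kp.factorization q) :
    (∀ q : ℕ, q.Prime → q ∣ n →
      q ∣ Nat.card φ.ker ∧ q ∣ n / Nat.card φ.ker) ∧ Nat.card φ.ker ≠ 1 :=
  prime_divisors_of_n_divide_k_and_n_div_k_general m n hn1 hcop A B hA hB φ hact hval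
end
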